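/- arXiv:1712.07364 — 2 statements merged into one kernel-verified Lean document; each statement's English description precedes it below -/
import Mathlib

section
/- For every x > 0 and every θ ≠ 0, the derivative with respect to θ of the Box-Cox transformation, namely (1/θ²)·((θ·log x − 1)·x^θ + 1), is nonnegative. Consequently, for each fixed x > 0 the map θ ↦ Λ_θ(x) is monotone nondecreasing on ℝ \ {0}. -/
/-!
With `u = θ log x` we have `x ^ θ = exp u`, so the numerator of the derivative is
`(u - 1) exp u + 1`, which is nonnegative because `1 - u ≤ exp (-u)`.
Monotonicity needs no derivative: for `θ ≠ 0`, `Λ_θ(x) = (x ^ θ - x ^ 0) / (θ - 0)` is the slope of the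
secant of the convex function `θ ↦ x ^ θ` through `0`, and such slopes increase with `θ`.
-/

/-- The Box-Cox transformation. -/
noncomputable def boxCox (θ x : ℝ) : ℝ :=
  if θ = 0 then Real.log x else (x ^ θ - 1) / θ

open Real

lemma sub_one_mul_exp_add_one_nonneg (u : ℝ) : 0 ≤ (u - 1) * exp u + 1 := by
  have h : (1 - u) * exp u ≤ exp (-u) * exp u := by
    gcongr
    linarith [add_one_le_exp (-u)]
  rw [← exp_add, neg_add_cancel, exp_zero] at h
  linarith

lemma mul_log_sub_one_mul_rpow_add_one_nonneg {x : ℝ} (hx : 0 < x) (θ : ℝ) :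
    0 ≤ (θ * log x - 1) * x ^ θ + 1 := by
  rw [rpow_def_of_pos hx, mul_comm (log x)]
  exact sub_one_mul_exp_add_one_nonneg _

lemma boxCox_eq_slope_rpow {θ : ℝ} (hθ : θ ≠ 0) (x : ℝ) :
    boxCox θ x = (x ^ θ - x ^ (0 : ℝ)) / (θ - 0) := by
  rw [boxCox, if_neg hθ, rpow_zero, sub_zero]

lemma boxCox_le_boxCox {x : ℝ} (hx : 0 < x) {θ₁ θ₂ : ℝ} (h₁ : θ₁ ≠ 0) (h₂ : θ₂ ≠ 0)
    (hle : θ₁ ≤ θ₂) : boxCox θ₁ x ≤ boxCox θ₂ x := by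
  rw [boxCox_eq_slope_rpow h₁, boxCox_eq_slope_rpow h₂]
  exact (convexOn_rpow_left hx).secant_mono (Set.mem_univ 0) (Set.mem_univ θ₁)
    (Set.mem_univ θ₂) h₁ h₂ hle

/-- For every `x > 0` and `θ ≠ 0`, the derivative in `θ` of the Box-Cox
transformation, namely `(1/θ²)·((θ·log x − 1)·x^θ + 1)`, is nonnegative;
consequently `θ ↦ Λ_θ(x)` is monotone nondecreasing on `ℝ \ {0}`. -/
theorem boxCox_deriv_nonneg_and_mono (x : ℝ) (hx : 0 < x) :
    (∀ θ : ℝ, θ ≠ 0 → 0 ≤ (1 / θ ^ 2) * ((θ * Real.log x - 1) * x ^ θ + 1)) ∧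
    (∀ θ₁ θ₂ : ℝ, θ₁ ≠ 0 → θ₂ ≠ 0 → θ₁ ≤ θ₂ → boxCox θ₁ x ≤ boxCox θ₂ x) :=
  ⟨fun θ _ => mul_nonneg (by positivity) (mul_log_sub_one_mul_rpow_add_one_nonneg hx θ),
    fun _ _ h₁ h₂ hle => boxCox_le_boxCox hx h₁ h₂ hle⟩
end

section
/- Let Y, X be random variables, let ε = Λ(Y) − m(X) with m(X) = E[Λ(Y) | X], assume Var(ε | X) = σ² is constant, and let ε̇ = Λ̇(Y) − ṁ(X) with ṁ(X) = E[Λ̇(Y) | X]. For scalars (h₂, h₄) the Gateaux derivative at r = 0 of r ↦ E[ −(h₄₀ + r(h₄−h₄₀))/(2(σ² + r(h₂−σ²))) + ((h₄₀+r(h₄−h₄₀))/(2(σ²+r(h₂−σ²))²))·ε² − (1/(σ²+r(h₂−σ²)))·ε·ε̇ | X ] equals −(h₄−h₄₀)/(2σ²) + h₄₀(h₂−σ²)/(2σ⁴) + (h₄−h₄₀)/(2σ²) − h₄₀(h₂−σ²)/σ⁴ + (h₂−σ²)/σ⁴·E[ε·ε̇ | X], which vanishes when h₄₀ = 2E[ε·ε̇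 | X]. -/
/-!
Write the conditional mean of the score as a function `scoreMean σ² b v u` of the nuisance values
`(v, u) = (σ̇², σ²)`. Its partial derivative in `v` is `-1/(2u) + σ²/(2u²)`, which vanishes at
`u = σ²` because `E[ε²|X] = σ²`; its partial derivative in `u` at `u = σ²` is
`(2 E[ε ε̇|X] - v) / (2σ⁴)`, which vanishes at `v = 2 E[ε ε̇|X]`. The chain rule along the
perturbation path then gives the derivative `(h₂ - σ²)(2b - h₄₀)/(2σ⁴)`.
-/

/-- The conditional mean of the score given `E[ε²|X] = σ2` and `E[ε ε̇|X] = b`, at nuisance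
values `σ̇² = v` and `σ² = u`. -/
noncomputable def scoreMean (σ2 b v u : ℝ) : ℝ :=
  -(v / (2 * u)) + v / (2 * u ^ 2) * σ2 - 1 / u * b

theorem hasDerivAt_const_add_mul (a d x : ℝ) : HasDerivAt (fun r : ℝ => a + r * d) d x := by
  simpa using ((hasDerivAt_id x).mul_const d).const_add a

theorem hasDerivAt_scoreMean {v u : ℝ → ℝ} {v' u' x : ℝ} (σ2 b : ℝ)
    (hv : HasDerivAt v v' x) (hu : HasDerivAt u u' x) (hux : u x ≠ 0) :
    HasDerivAt (fun r => scoreMean σ2 b (v r) (u r))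
      (v' * ((σ2 - u x) / (2 * u x ^ 2))
        + u' * ((v x * (u x - 2 * σ2) + 2 * b * u x) / (2 * u x ^ 3))) x := by
  have h2u : 2 * u x ≠ 0 := mul_ne_zero two_ne_zero hux
  have h2u2 : 2 * u x ^ 2 ≠ 0 := mul_ne_zero two_ne_zero (pow_ne_zero 2 hux)
  have hmean := ((hv.div (hu.const_mul 2) h2u).neg.add
    ((hv.div ((hu.pow 2).const_mul 2) h2u2).mul_const σ2)).sub
    (((hasDerivAt_const x (1 : ℝ)).div hu hux).mul_const b)
  refine hmean.congr_deriv ?_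
  simp only [Pi.pow_apply]
  field_simp
  ring

theorem hasDerivAt_scoreMean_of_eq {v u : ℝ → ℝ} {v' u' x σ2 : ℝ} (b : ℝ)
    (hv : HasDerivAt v v' x) (hu : HasDerivAt u u' x) (hux : u x = σ2) (hσ2 : σ2 ≠ 0) :
    HasDerivAt (fun r => scoreMean σ2 b (v r) (u r)) (u' * (2 * b - v x) / (2 * σ2 ^ 2)) x := by
  refine (hasDerivAt_scoreMean σ2 b hv hu (hux ▸ hσ2)).congr_deriv ?_
  rw [hux]
  field_simp
  ring

/-- The Gateaux-derivative computation behind Neyman orthogonality in the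
transformation model. Here `s = σ² = E[ε²|X] > 0` (constant conditional
variance), `b = E[ε·ε̇|X]`, and `(h₂, h₄)` is the direction of the perturbation
of the nuisance parameters `(σ², σ̇²)`, with `h₄₀ = σ̇²`. The derivative at
`r = 0` of the conditional expectation of the score part equals the displayed
expression, which vanishes when `h₄₀ = 2·E[ε·ε̇|X]`. -/
theorem neyman_orthogonality_gateaux_derivative
    (s b h₂ h₄ h₄₀ : ℝ) (hs : 0 < s) :
    HasDerivAt
      (fun r : ℝ =>
        -((h₄₀ + r * (h₄ - h₄₀)) / (2 * (s + r * (h₂ - s))))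
          + ((h₄₀ + r * (h₄ - h₄₀)) / (2 * (s + r * (h₂ - s)) ^ 2)) * s
          - (1 / (s + r * (h₂ - s))) * b)
      (-((h₄ - h₄₀) / (2 * s)) + h₄₀ * (h₂ - s) / (2 * s ^ 2)
        + (h₄ - h₄₀) / (2 * s) - h₄₀ * (h₂ - s) / s ^ 2
        + (h₂ - s) / s ^ 2 * b) 0 ∧
    (h₄₀ = 2 * b →
      -((h₄ - h₄₀) / (2 * s)) + h₄₀ * (h₂ - s) / (2 * s ^ 2)
        + (h₄ - h₄₀) / (2 * s) - h₄₀ * (h₂ - s) / s ^ 2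
        + (h₂ - s) / s ^ 2 * b = 0) := by
  have hpath : HasDerivAt (fun r => scoreMean s b (h₄₀ + r * (h₄ - h₄₀)) (s + r * (h₂ - s)))
      ((h₂ - s) * (2 * b - h₄₀) / (2 * s ^ 2)) 0 := by
    simpa using hasDerivAt_scoreMean_of_eq b (hasDerivAt_const_add_mul h₄₀ (h₄ - h₄₀) 0)
      (hasDerivAt_const_add_mul s (h₂ - s) 0) (by simp) hs.ne'
  have hderiv : -((h₄ - h₄₀) / (2 * s)) + h₄₀ * (h₂ - s) / (2 * s ^ 2)
      + (h₄ - h₄₀) / (2 * s) - h₄₀ * (h₂ - s) / s ^ 2 + (h₂ - s) / s ^ 2 * b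
      = (h₂ - s) * (2 * b - h₄₀) / (2 * s ^ 2) := by
    field_simp
    ring
  rw [hderiv]
  exact ⟨hpath, fun h => by rw [h, sub_self, mul_zero, zero_div]⟩
end
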